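/- arXiv:0902.0337 — 5 statements merged into one kernel-verified Lean document; each statement's English description precedes it below -/
import Mathlib

section
/- If the arrival-rate region is defined as A(μ) = {λ ∈ ℝ_+^L : λ ⪯ μ} (componentwise inequality) for a departure-rate vector μ that is a convex combination ∑ p_ℓ r_ℓ of nonnegative vectors r_ℓ including the zero vector, then the union of A(∑ p_ℓ r_ℓ) over all probability vectors p equals the convex hull of the r_ℓ. (Downward closure coincides with the convex hull when 0 is among the generators and each r_ℓ is of the form d·v with v ∈ {0,1}^L covering all coordinate patterns.) -/
open Finset

/-- The 0-1 indicator vector of a boolean vector `v ∈ {0,1}^L`. -/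
def ind {L : ℕ} (v : Fin L → Bool) : Fin L → ℝ := fun ℓ => if v ℓ then 1 else 0

/-- The number of ones `‖v‖₁` of `v ∈ {0,1}^L`. -/
def cnt {L : ℕ} (v : Fin L → Bool) : ℕ := (Finset.univ.filter (fun ℓ => v ℓ = true)).card

/-!
The convex hull `C` of the points `r_v = d(‖v‖₁) • v` is downward closed in the nonnegative
orthant, so the box below any `μ = ∑ p_v r_v ∈ C` lies in `C`; conversely every point of `C` is
such a `μ` and lies in its own box. A convex set that is stable under zeroing any one coordinate
is downward closed: lower the coordinates one at a time, each new point lying on a segment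
between a point of the set and its zeroed copy. By linearity it is enough to zero a coordinate of
a generator: this turns `r_v` into `d(‖v‖₁) • v'` with `v' ≤ v`, which lies on the segment from
`0 = r_0` to `r_{v'}` because `d` is nonincreasing.
-/

open Function Set

theorem convexHull_range_eq_image_stdSimplex {R E ι : Type*} [Field R] [LinearOrder R]
    [IsStrictOrderedRing R] [AddCommGroup E] [Module R E] [Fintype ι] (f : ι → E) :
    convexHull R (range f) = (fun p => ∑ i, p i • f i) '' stdSimplex R ι := by
  classical
  have hlin : (fun p : ι → R => ∑ i, p i • f i) = Fintype.linearCombination R f := by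
    ext p
    simp [Fintype.linearCombination_apply]
  rw [hlin, ← convexHull_basis_eq_stdSimplex, LinearMap.image_convexHull, ← range_comp]
  congr 2
  ext i
  simp [Fintype.linearCombination_apply, ite_smul]

section DownwardClosed

variable {𝕜 ι : Type*} [Field 𝕜] [LinearOrder 𝕜] [IsStrictOrderedRing 𝕜] [DecidableEq ι]
  {K : Set (ι → 𝕜)}

theorem Convex.update_mem_of_mem_Icc (hK : Convex 𝕜 K) {x : ι → 𝕜} (hx : x ∈ K) {i : ι}
    (hx₀ : update x i 0 ∈ K) {c : 𝕜} (hc : c ∈ Icc 0 (x i)) : update x i c ∈ K := by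
  rw [← segment_eq_Icc (hc.1.trans hc.2)] at hc
  obtain ⟨a, b, ha, hb, hab, rfl⟩ := hc
  convert hK hx₀ hx ha hb hab using 1
  ext j
  rcases eq_or_ne j i with rfl | hj
  · simp
  · simp [update_of_ne hj, ← add_mul, hab]

theorem Convex.mem_of_nonneg_of_le [Fintype ι] (hK : Convex 𝕜 K)
    (hK₀ : ∀ x ∈ K, ∀ i, update x i 0 ∈ K) {x y : ι → 𝕜} (hx : x ∈ K) (hy₀ : 0 ≤ y)
    (hyx : y ≤ x) : y ∈ K := by
  suffices h : ∀ s : Finset ι, ∀ x ∈ K, y ≤ x → (∀ i ∉ s, y i = x i) → y ∈ K from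
    h univ x hx hyx (by simp)
  intro s
  induction s using Finset.induction_on with
  | empty => exact fun x hx _ hxy => by rwa [funext fun i => hxy i (notMem_empty i)]
  | insert a s _ ih =>
    intro x hx hyx hys
    refine ih (update x a (y a)) ?_ ?_ ?_
    · exact hK.update_mem_of_mem_Icc hx (hK₀ x hx a) ⟨hy₀ a, hyx a⟩
    · intro j
      rcases eq_or_ne j a with rfl | hj
      · simp
      · simpa [update_of_ne hj] using hyx j
    · intro j hj
      rcases eq_or_ne j a with rfl | hja
      · simp
      · simpa [update_of_ne hja] using hys j (by simp [hj, hja])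

end DownwardClosed

section Rates

variable {L : ℕ}

theorem ind_nonneg (v : Fin L → Bool) : 0 ≤ ind v := fun ℓ => by
  unfold ind; split <;> norm_num

theorem ind_update_false (v : Fin L → Bool) (i : Fin L) :
    ind (update v i false) = update (ind v) i 0 := by
  ext j
  rcases eq_or_ne j i with rfl | hj
  · simp [ind]
  · simp [ind, update_of_ne hj]

theorem cnt_update_false_le (v : Fin L → Bool) (i : Fin L) : cnt (update v i false) ≤ cnt v := by
  refine card_le_card fun j => ?_
  rcases eq_or_ne j i with rfl | hj
  · simp
  · simp [update_of_ne hj]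

theorem update_zero_mem_convexHull_rates {d : ℕ → ℝ} (hd₀ : ∀ k, 0 ≤ d k) (hd : Antitone d)
    {x : Fin L → ℝ} (hx : x ∈ convexHull ℝ (range fun v => d (cnt v) • ind v)) (i : Fin L) :
    update x i 0 ∈ convexHull ℝ (range fun v => d (cnt v) • ind v) := by
  set C := convexHull ℝ (range fun v : Fin L → Bool => d (cnt v) • ind v)
  have hlin : IsLinearMap ℝ fun x : Fin L → ℝ => update x i 0 :=
    ⟨fun x y => by simpa using update_add x y i 0 0, fun c x => by simpa using update_smul c x i 0⟩
  refine convexHull_min ?_ ((convex_convexHull ℝ _).is_linear_preimage hlin) hx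
  rintro _ ⟨v, rfl⟩
  set v' := update v i false
  have hC₀ : (0 : Fin L → ℝ) ∈ C := subset_convexHull ℝ _ ⟨fun _ => false, by ext; simp [ind]⟩
  have hCv' : d (cnt v') • ind v' ∈ C := subset_convexHull ℝ _ ⟨v', rfl⟩
  have hdv : d (cnt v) ≤ d (cnt v') := hd (cnt_update_false_le v i)
  have hupd : update (d (cnt v) • ind v) i 0 = (d (cnt v) / d (cnt v')) • (d (cnt v') • ind v') := by
    rw [smul_smul, div_mul_cancel_of_imp fun h => le_antisymm (h ▸ hdv) (hd₀ _),
      ind_update_false, ← update_smul, smul_zero]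
  rw [Set.mem_preimage, hupd]
  exact (convex_convexHull ℝ _).smul_mem_of_zero_mem hC₀ hCv'
    ⟨div_nonneg (hd₀ _) (hd₀ _), div_le_one_of_le₀ hdv (hd₀ _)⟩

end Rates

theorem stmt1_general (L : ℕ) (d : ℕ → ℝ)
    (hd_pos : ∀ k, 0 < d k)
    (hd_mono : ∀ j k, j ≤ k → d k ≤ d j) :
    (⋃ p ∈ {p : (Fin L → Bool) → ℝ | (∀ v, 0 ≤ p v) ∧ (∑ v, p v) = 1},
      {lam : Fin L → ℝ | (∀ ℓ, 0 ≤ lam ℓ) ∧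
        ∀ ℓ, lam ℓ ≤ (∑ v, p v • (d (cnt v) • ind v)) ℓ})
    = convexHull ℝ {x : Fin L → ℝ | ∃ v : Fin L → Bool, x = d (cnt v) • ind v} := by
  have hd₀ k : 0 ≤ d k := (hd_pos k).le
  have hS : {x : Fin L → ℝ | ∃ v, x = d (cnt v) • ind v} = range fun v => d (cnt v) • ind v := by
    ext; simp [eq_comm]
  have hC := convexHull_range_eq_image_stdSimplex (R := ℝ) fun v : Fin L → Bool => d (cnt v) • ind v
  rw [hS]
  ext lam
  simp only [mem_iUnion, exists_prop]
  constructor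
  · rintro ⟨p, hp, hlam₀, hlam⟩
    exact (convex_convexHull ℝ _).mem_of_nonneg_of_le
      (fun x hx i => update_zero_mem_convexHull_rates hd₀ hd_mono hx i)
      (hC ▸ mem_image_of_mem _ hp) hlam₀ hlam
  · rw [hC]
    rintro ⟨p, hp, rfl⟩
    exact ⟨p, hp, sum_nonneg fun v _ => smul_nonneg (hp.1 v) (smul_nonneg (hd₀ _) (ind_nonneg v)),
      fun _ => le_rfl⟩

theorem stmt1 (L : ℕ) (hL : 0 < L) (d : ℕ → ℝ)
    (hd_pos : ∀ k, 0 < d k)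
    (hd_mono : ∀ j k, j ≤ k → d k ≤ d j) :
    (⋃ p ∈ {p : (Fin L → Bool) → ℝ | (∀ v, 0 ≤ p v) ∧ (∑ v, p v) = 1},
      {lam : Fin L → ℝ | (∀ ℓ, 0 ≤ lam ℓ) ∧
        ∀ ℓ, lam ℓ ≤ (∑ v, p v • (d (cnt v) • ind v)) ℓ})
    = convexHull ℝ {x : Fin L → ℝ | ∃ v : Fin L → Bool, x = d (cnt v) • ind v} :=
  stmt1_general L d hd_pos hd_mono
end

section
/- Let v ∈ {0,1}^L with ‖v‖_1 = m, m in the index set I = {k : k·d(k) > max_{0≤j<k} j·d(j)}. Then the point s = d(m)·v is an exposed point of the convex hull of R = {d(‖u‖_1)·u : u ∈ {0,1}^L}: for every u ∈ {0,1}^L with d(‖u‖_1)·u ≠ s, the inner product ⟨d(‖u‖_1)·u, v⟩ < m·d(m), while ⟨s, v⟩ = m·d(m). -/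
open Finset

section BoolVectors

variable {L : ℕ}

lemma cnt_le (u : Fin L → Bool) : cnt u ≤ L := by
  simpa [cnt] using card_filter_le univ (fun ℓ => u ℓ = true)

lemma sum_smul_ind_mul_ind (c : ℝ) (u v : Fin L → Bool) :
    ∑ ℓ, (c • ind u) ℓ * ind v ℓ = c * #{ℓ | u ℓ = true ∧ v ℓ = true} := by
  rw [card_filter, Nat.cast_sum, mul_sum]
  refine sum_congr rfl fun ℓ _ => ?_
  simp only [Pi.smul_apply, smul_eq_mul, ind]
  cases u ℓ <;> cases v ℓ <;> simp

lemma filter_and_subset_left (u v : Fin L → Bool) :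
    univ.filter (fun ℓ => u ℓ = true ∧ v ℓ = true) ⊆ univ.filter (fun ℓ => u ℓ = true) :=
  monotone_filter_right _ fun _ _ h => h.1

lemma filter_and_subset_right (u v : Fin L → Bool) :
    univ.filter (fun ℓ => u ℓ = true ∧ v ℓ = true) ⊆ univ.filter (fun ℓ => v ℓ = true) :=
  monotone_filter_right _ fun _ _ h => h.2

lemma card_filter_and_le_cnt_left (u v : Fin L → Bool) :
    #{ℓ | u ℓ = true ∧ v ℓ = true} ≤ cnt u :=
  card_le_card (filter_and_subset_left u v)

lemma card_filter_and_le_cnt_right (u v : Fin L → Bool) :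
    #{ℓ | u ℓ = true ∧ v ℓ = true} ≤ cnt v :=
  card_le_card (filter_and_subset_right u v)

lemma eq_of_card_filter_and_eq_cnt {u v : Fin L → Bool}
    (hu : #{ℓ | u ℓ = true ∧ v ℓ = true} = cnt u)
    (hv : #{ℓ | u ℓ = true ∧ v ℓ = true} = cnt v) : u = v := by
  have hsupp : univ.filter (fun ℓ => u ℓ = true) = univ.filter (fun ℓ => v ℓ = true) :=
    (eq_of_subset_of_card_le (filter_and_subset_left u v) hu.ge).symm.trans
      (eq_of_subset_of_card_le (filter_and_subset_right u v) hv.ge)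
  funext ℓ
  simpa using congrArg (ℓ ∈ ·) hsupp

end BoolVectors

/-- The value `d k · t` of the linear functional `⟨·, v⟩` at `d k · u`, where `k = ‖u‖₁` and
`t = |supp u ∩ supp v| ≤ min k m`, is below `m · d m` unless `t = k = m`. -/
lemma mul_lt_of_mem_indexSet (d : ℕ → ℝ) {k m t : ℕ} (hm : 1 ≤ m)
    (hmI : ∀ j < m, (j : ℝ) * d j < (m : ℝ) * d m) (hd_dec : m < k → d k < d m)
    (htk : t ≤ k) (htm : t ≤ m) (hkm : k = m → t < m) :
    d k * t < m * d m := by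
  have hm_pos : (0 : ℝ) < m := by exact_mod_cast hm
  have hdm_pos : 0 < d m := by simpa [hm_pos] using hmI 0 (by omega)
  rcases le_or_gt (d k) 0 with hdk | hdk
  · nlinarith [(Nat.cast_nonneg t : (0 : ℝ) ≤ t)]
  rcases lt_trichotomy k m with hlt | rfl | hgt
  · calc d k * t ≤ d k * k := by gcongr
      _ < m * d m := by rw [mul_comm]; exact hmI k hlt
  · rw [mul_comm]
    gcongr
    exact_mod_cast hkm rfl
  · calc d k * t ≤ d k * m := by gcongr
      _ < m * d m := by rw [mul_comm]; gcongr; exact hd_dec hgt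

theorem stmt2_general (L m : ℕ) (d : ℕ → ℝ)
    (hd_dec : ∀ j k, j < k → k ≤ L → d k < d j)
    (hm : 1 ≤ m)
    -- `m` belongs to the index set `I = {k : k·d(k) > max_{0 ≤ j < k} j·d(j)}`
    (hmI : ∀ j < m, (j : ℝ) * d j < (m : ℝ) * d m)
    (v : Fin L → Bool) (hv : cnt v = m) :
    (∀ u : Fin L → Bool, d (cnt u) • ind u ≠ d m • ind v →
      (∑ ℓ, (d (cnt u) • ind u) ℓ * ind v ℓ) < (m : ℝ) * d m)
    ∧ (∑ ℓ, (d m • ind v) ℓ * ind v ℓ) = (m : ℝ) * d m := by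
  refine ⟨fun u hne => ?_, ?_⟩
  · rw [sum_smul_ind_mul_ind]
    refine mul_lt_of_mem_indexSet d hm hmI (fun h => hd_dec _ _ h (cnt_le u))
      (card_filter_and_le_cnt_left u v) (hv ▸ card_filter_and_le_cnt_right u v) fun hum => ?_
    refine (hv ▸ card_filter_and_le_cnt_right u v).lt_of_ne fun ht => hne ?_
    rw [eq_of_card_filter_and_eq_cnt (ht.trans hum.symm) (ht.trans hv.symm), hv]
  · rw [sum_smul_ind_mul_ind, mul_comm]
    simp only [and_self]
    exact congrArg (· * d m) (congrArg Nat.cast hv)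

theorem stmt2 (L m : ℕ) (d : ℕ → ℝ)
    (hd_pos : ∀ k ≤ L, 0 < d k)
    (hd_dec : ∀ j k, j < k → k ≤ L → d k < d j)
    (hm : 1 ≤ m) (hmL : m ≤ L)
    -- `m` belongs to the index set `I = {k : k·d(k) > max_{0 ≤ j < k} j·d(j)}`
    (hmI : ∀ j < m, (j : ℝ) * d j < (m : ℝ) * d m)
    (v : Fin L → Bool) (hv : cnt v = m) :
    (∀ u : Fin L → Bool, d (cnt u) • ind u ≠ d m • ind v →
      (∑ ℓ, (d (cnt u) • ind u) ℓ * ind v ℓ) < (m : ℝ) * d m)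
    ∧ (∑ ℓ, (d m • ind v) ℓ * ind v ℓ) = (m : ℝ) * d m :=
  stmt2_general L m d hd_dec hm hmI v hv
end

section
/- Let d : {0,...,L} → ℝ_{>0} be strictly decreasing and suppose a ∈ {1,...,L} satisfies a·d(a) ≤ max_{0≤m<a} m·d(m). Let m̃ = argmax_{0≤m<a} m·d(m) and let v̂ ∈ {0,1}^L have exactly a ones. Then d(a)·v̂ lies in the convex hull of {0} ∪ {d(m̃)·v : v ∈ {0,1}^L, ‖v‖_1 = m̃, v ⪯ v̂}. In particular, the average z = (1/|W|)·∑_{v∈W} d(m̃)·v over W = {v ∈ {0,1}^L : ‖v‖_1 = m̃, v ⪯ v̂} equals (m̃/a)·d(m̃)·v̂, and d(a)·v̂ lies on the segment [0, z]. -/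
/-! Identify `{0,1}^L` with the subsets of `Fin L`. A coordinate in the support of `v̂` lies in
`C(a-1, m̃-1)` of the `C(a, m̃)` subsets of size `m̃` of that support, and coordinates outside it in
none, so the average `z` is `(m̃/a)·d(m̃)·v̂`. As `a·d(a) ≤ m̃·d(m̃)`, the vector `d(a)·v̂` is a
multiple of `z` by a scalar in `[0, 1]`, so it lies on `[0, z] ⊆ conv ({0} ∪ …)`. -/

open Finset

lemma sum_powersetCard_ite_mem {α R : Type*} [DecidableEq α] [AddCommMonoidWithOne R]
    (S : Finset α) {k : ℕ} (hk : 1 ≤ k) :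
    ∑ T ∈ S.powersetCard k, (fun x => if x ∈ T then (1 : R) else 0)
      = fun x => if x ∈ S then ((#S - 1).choose (k - 1) : R) else 0 := by
  funext x
  rw [Finset.sum_apply, Finset.sum_boole]
  split_ifs with hx
  · have h := card_filter_powersetCard_subset {x} S k (singleton_subset_iff.2 hx) (by simpa)
    simp only [singleton_subset_iff, card_singleton] at h
    rw [h]
  · rw [filter_false_of_mem fun T hT hxT => hx ((mem_powersetCard.1 hT).1 hxT), card_empty,
      Nat.cast_zero]

lemma mul_choose_pred_eq_choose_mul {n k : ℕ} (hn : 1 ≤ n) (hk : 1 ≤ k) :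
    n * (n - 1).choose (k - 1) = n.choose k * k := by
  obtain ⟨n, rfl⟩ := Nat.exists_eq_add_of_le' hn
  obtain ⟨k, rfl⟩ := Nat.exists_eq_add_of_le' hk
  simpa using Nat.add_one_mul_choose_eq n k

lemma inv_card_smul_sum_mem_convexHull {ι E : Type*} [AddCommGroup E] [Module ℝ E]
    {s : Finset ι} (hs : s.Nonempty) {f : ι → E} {A : Set E} (hf : ∀ i ∈ s, f i ∈ A) :
    (#s : ℝ)⁻¹ • ∑ i ∈ s, f i ∈ convexHull ℝ A := by
  have h := s.centerMass_mem_convexHull (w := fun _ => (1 : ℝ)) (fun _ _ => zero_le_one)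
    (by simpa using hs) hf
  simpa [Finset.centerMass] using h

lemma smul_mem_segment_zero_smul {E : Type*} [AddCommGroup E] [Module ℝ E] (x : E) {c c' : ℝ}
    (hc : 0 ≤ c) (hcc' : c ≤ c') : c • x ∈ segment ℝ 0 (c' • x) := by
  rcases hc.eq_or_lt with rfl | hc
  · simpa using left_mem_segment ℝ (0 : E) (c' • x)
  have hc' : 0 < c' := hc.trans_le hcc'
  refine ⟨1 - c / c', c / c', by linarith [(div_le_one hc').2 hcc'], by positivity, by ring, ?_⟩
  rw [smul_zero, zero_add, smul_smul, div_mul_cancel₀ c hc'.ne']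

def boolFunEquivFinset (α : Type*) [Fintype α] [DecidableEq α] : (α → Bool) ≃ Finset α where
  toFun v := univ.filter (v · = true)
  invFun T x := decide (x ∈ T)
  left_inv v := by ext; simp
  right_inv T := by ext; simp

section BoolVectors

variable {L : ℕ}

lemma cnt_eq_card (v : Fin L → Bool) : cnt v = #(boolFunEquivFinset (Fin L) v) := rfl

lemma ind_eq_ite_mem (v : Fin L → Bool) :
    ind v = fun ℓ => if ℓ ∈ boolFunEquivFinset (Fin L) v then 1 else 0 := by
  funext ℓ
  simp [ind, boolFunEquivFinset]

lemma mem_filter_cnt_le_iff (vhat : Fin L → Bool) (k : ℕ) (v : Fin L → Bool) :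
    v ∈ univ.filter (fun v => cnt v = k ∧ ∀ ℓ, v ℓ = true → vhat ℓ = true) ↔
      boolFunEquivFinset (Fin L) v ∈ (boolFunEquivFinset (Fin L) vhat).powersetCard k := by
  rw [mem_filter]
  simp [cnt, boolFunEquivFinset, subset_iff, and_comm]

lemma card_filter_cnt_le (vhat : Fin L → Bool) (k : ℕ) :
    #(univ.filter (fun v => cnt v = k ∧ ∀ ℓ, v ℓ = true → vhat ℓ = true))
      = (cnt vhat).choose k := by
  rw [card_equiv _ (mem_filter_cnt_le_iff vhat k), card_powersetCard, cnt_eq_card]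

lemma sum_filter_cnt_le_ind (vhat : Fin L → Bool) {k : ℕ} (hk : 1 ≤ k) :
    ∑ v ∈ univ.filter (fun v => cnt v = k ∧ ∀ ℓ, v ℓ = true → vhat ℓ = true), ind v
      = ((cnt vhat - 1).choose (k - 1) : ℝ) • ind vhat := by
  rw [sum_equiv _ (mem_filter_cnt_le_iff vhat k) (g := fun T ℓ => if ℓ ∈ T then (1 : ℝ) else 0)
      (fun v _ => ind_eq_ite_mem v), sum_powersetCard_ite_mem _ hk, ind_eq_ite_mem vhat,
    cnt_eq_card]
  funext ℓ
  simp

end BoolVectors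

theorem stmt3_general (L a mt : ℕ) (d : ℕ → ℝ)
    (hd_pos : ∀ k ≤ L, 0 < d k)
    (haL : a ≤ L)
    (hmt1 : 1 ≤ mt) (hmt_lt : mt < a)
    -- `a·d(a) ≤ max_{0 ≤ m < a} m·d(m)`
    (ha_le : (a : ℝ) * d a ≤ (mt : ℝ) * d mt)
    (vhat : Fin L → Bool) (hvhat : cnt vhat = a) :
    let W : Finset (Fin L → Bool) :=
      Finset.univ.filter (fun v => cnt v = mt ∧ ∀ ℓ, v ℓ = true → vhat ℓ = true)
    let z : Fin L → ℝ := (W.card : ℝ)⁻¹ • ∑ v ∈ W, d mt • ind v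
    z = ((mt : ℝ) / (a : ℝ)) • (d mt • ind vhat)
    ∧ d a • ind vhat ∈ segment ℝ (0 : Fin L → ℝ) z
    ∧ d a • ind vhat ∈ convexHull ℝ
        ({0} ∪ {x : Fin L → ℝ | ∃ v : Fin L → Bool,
          cnt v = mt ∧ (∀ ℓ, v ℓ = true → vhat ℓ = true) ∧ x = d mt • ind v}) := by
  intro W z
  have ha_pos : (0 : ℝ) < a := by exact_mod_cast Nat.zero_lt_of_lt hmt_lt
  have hW_card : #W = a.choose mt := by rw [card_filter_cnt_le, hvhat]
  have hz : z = ((mt : ℝ) / a) • (d mt • ind vhat) := by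
    have hchoose : (a : ℝ) * (a - 1).choose (mt - 1) = a.choose mt * mt := by
      exact_mod_cast mul_choose_pred_eq_choose_mul (hmt1.trans hmt_lt.le) hmt1
    have hchoose_pos : (0 : ℝ) < a.choose mt := by exact_mod_cast Nat.choose_pos hmt_lt.le
    simp only [z]
    rw [← smul_sum, sum_filter_cnt_le_ind vhat hmt1, hvhat, hW_card, smul_smul, smul_smul,
      smul_smul]
    congr 1
    field_simp
    linear_combination d mt * hchoose
  have hseg : d a • ind vhat ∈ segment ℝ 0 z := by
    rw [hz, smul_smul]
    refine smul_mem_segment_zero_smul _ (hd_pos a haL).le ?_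
    rw [div_mul_eq_mul_div, le_div_iff₀ ha_pos]
    linarith
  have hz_hull : z ∈ convexHull ℝ {x : Fin L → ℝ | ∃ v : Fin L → Bool,
      cnt v = mt ∧ (∀ ℓ, v ℓ = true → vhat ℓ = true) ∧ x = d mt • ind v} := by
    refine inv_card_smul_sum_mem_convexHull (s := W) (f := fun v => d mt • ind v)
      (card_pos.1 (hW_card ▸ Nat.choose_pos hmt_lt.le)) fun v hv => ?_
    exact ⟨v, (mem_filter.1 hv).2.1, (mem_filter.1 hv).2.2, rfl⟩
  refine ⟨hz, hseg, (convex_convexHull ℝ _).segment_subset ?_ ?_ hseg⟩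
  · exact subset_convexHull ℝ _ (Or.inl rfl)
  · exact convexHull_mono Set.subset_union_right hz_hull

theorem stmt3 (L a mt : ℕ) (hL : 1 ≤ L) (d : ℕ → ℝ)
    (hd_pos : ∀ k ≤ L, 0 < d k)
    (hd_dec : ∀ j k, j < k → k ≤ L → d k < d j)
    (ha1 : 1 ≤ a) (haL : a ≤ L)
    (hmt1 : 1 ≤ mt) (hmt_lt : mt < a)
    -- `mt` is the argmax of `m ↦ m·d(m)` over `0 ≤ m < a`
    (hmt_max : ∀ m' < a, (m' : ℝ) * d m' ≤ (mt : ℝ) * d mt)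
    -- `a·d(a) ≤ max_{0 ≤ m < a} m·d(m)`
    (ha_le : (a : ℝ) * d a ≤ (mt : ℝ) * d mt)
    (vhat : Fin L → Bool) (hvhat : cnt vhat = a) :
    let W : Finset (Fin L → Bool) :=
      Finset.univ.filter (fun v => cnt v = mt ∧ ∀ ℓ, v ℓ = true → vhat ℓ = true)
    let z : Fin L → ℝ := (W.card : ℝ)⁻¹ • ∑ v ∈ W, d mt • ind v
    z = ((mt : ℝ) / (a : ℝ)) • (d mt • ind vhat)
    ∧ d a • ind vhat ∈ segment ℝ (0 : Fin L → ℝ) z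
    ∧ d a • ind vhat ∈ convexHull ℝ
        ({0} ∪ {x : Fin L → ℝ | ∃ v : Fin L → Bool,
          cnt v = mt ∧ (∀ ℓ, v ℓ = true → vhat ℓ = true) ∧ x = d mt • ind v}) :=
  stmt3_general L a mt d hd_pos haL hmt1 hmt_lt ha_le vhat hvhat
end

section
/- For integers 1 ≤ m < k ≤ L and θ > 0, the ratio of upper incomplete gamma functions Γ(L−k+1, kθ/P) / Γ(L−m+1, mθ/P) tends to 0 as P → 0⁺. -/
/-!
For large `x`, `Γ(n + 1, x)` lies between `exp (-x)` (once `x ≥ 1`) and `C_c · exp (-c x)` for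
any `c < 1`, the latter from `tⁿ ≤ n! (1 - c)⁻ⁿ exp ((1 - c) t)`. With `y = 1/P` the ratio is thus
at most `C · exp ((mθ - c kθ) y)`, which tends to `0` once `c` is chosen in `(m/k, 1)`.
-/

open MeasureTheory Filter Topology Set Real
open scoped Nat

/-- `upperGammaNat n x = Γ(n + 1, x)`. -/
noncomputable def upperGammaNat (n : ℕ) (x : ℝ) : ℝ := ∫ t in Ioi x, t ^ n * exp (-t)

lemma pow_mul_exp_neg_le (n : ℕ) {c t : ℝ} (hc : c < 1) (ht : 0 ≤ t) :
    t ^ n * exp (-t) ≤ n ! / (1 - c) ^ n * exp (-(c * t)) := by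
  have hc' : 0 < 1 - c := sub_pos.2 hc
  have h := pow_div_factorial_le_exp _ (mul_nonneg hc'.le ht) n
  rw [div_le_iff₀ (by positivity), mul_pow] at h
  calc t ^ n * exp (-t) = ((1 - c) ^ n * t ^ n) * exp (-t) / (1 - c) ^ n := by
        field_simp
    _ ≤ exp ((1 - c) * t) * n ! * exp (-t) / (1 - c) ^ n := by gcongr
    _ = n ! / (1 - c) ^ n * exp (-(c * t)) := by
        rw [mul_comm (exp _), mul_assoc, ← exp_add]; ring_nf

lemma integrableOn_pow_mul_exp_neg_Ioi (n : ℕ) (x : ℝ) :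
    IntegrableOn (fun t : ℝ => t ^ n * exp (-t)) (Ioi x) := by
  refine integrable_of_isBigO_exp_neg (b := 1 / 2) (by norm_num) (by fun_prop) ?_
  have h := (isLittleO_pow_exp_pos_mul_atTop n (b := 1 / 2) (by norm_num)).isBigO.mul
    (Asymptotics.isBigO_refl (fun t : ℝ => exp (-t)) atTop)
  refine h.congr_right fun t => ?_
  rw [← exp_add]; ring_nf

lemma upperGammaNat_nonneg (n : ℕ) {x : ℝ} (hx : 0 ≤ x) : 0 ≤ upperGammaNat n x :=
  setIntegral_nonneg measurableSet_Ioi fun t ht => by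
    have : 0 ≤ t := hx.trans (le_of_lt ht)
    positivity

lemma exp_neg_le_upperGammaNat (n : ℕ) {x : ℝ} (hx : 1 ≤ x) : exp (-x) ≤ upperGammaNat n x := by
  rw [← integral_exp_neg_Ioi]
  refine setIntegral_mono_on ?_ (integrableOn_pow_mul_exp_neg_Ioi n x) measurableSet_Ioi
    fun t ht => le_mul_of_one_le_left (exp_pos _).le (one_le_pow₀ (hx.trans (le_of_lt ht)))
  simpa using exp_neg_integrableOn_Ioi x one_pos

lemma upperGammaNat_le (n : ℕ) {c x : ℝ} (hc₀ : 0 < c) (hc₁ : c < 1) (hx : 0 ≤ x) :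
    upperGammaNat n x ≤ n ! / (1 - c) ^ n / c * exp (-(c * x)) := by
  have hexp : ∫ t in Ioi x, exp (-(c * t)) = exp (-(c * x)) / c := by
    simpa [neg_mul, neg_div_neg_eq] using integral_exp_mul_Ioi (neg_lt_zero.2 hc₀) x
  calc upperGammaNat n x ≤ ∫ t in Ioi x, n ! / (1 - c) ^ n * exp (-(c * t)) := by
        refine setIntegral_mono_on (integrableOn_pow_mul_exp_neg_Ioi n x) ?_ measurableSet_Ioi
          fun t ht => pow_mul_exp_neg_le n hc₁ (hx.trans (le_of_lt ht))
        have h : IntegrableOn (fun t => exp (-(c * t))) (Ioi x) := by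
          simpa using exp_neg_integrableOn_Ioi x hc₀
        exact h.const_mul _
    _ = n ! / (1 - c) ^ n / c * exp (-(c * x)) := by
        rw [integral_const_mul, hexp]; ring

lemma tendsto_upperGammaNat_div_atTop (n₁ n₂ : ℕ) {a b : ℝ} (ha : 0 < a) (hab : a < b) :
    Tendsto (fun y => upperGammaNat n₁ (b * y) / upperGammaNat n₂ (a * y)) atTop (𝓝 0) := by
  have hb : 0 < b := ha.trans hab
  obtain ⟨c, hac, hc₁⟩ : ∃ c, a / b < c ∧ c < 1 := exists_between ((div_lt_one hb).2 hab)
  have hc₀ : 0 < c := (div_pos ha hb).trans hac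
  have hacb : a - c * b < 0 := by rw [div_lt_iff₀ hb] at hac; linarith
  set C : ℝ := n₁ ! / (1 - c) ^ n₁ / c
  have hbound : Tendsto (fun y => C * exp ((a - c * b) * y)) atTop (𝓝 0) := by
    simpa using (tendsto_exp_atBot.comp (tendsto_id.const_mul_atTop_of_neg hacb)).const_mul C
  refine squeeze_zero' ?_ ?_ hbound
  · filter_upwards [eventually_ge_atTop 0] with y hy
    exact div_nonneg (upperGammaNat_nonneg n₁ (by positivity))
      (upperGammaNat_nonneg n₂ (by positivity))
  · filter_upwards [eventually_ge_atTop a⁻¹] with y hy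
    have hy₀ : 0 ≤ y := (inv_pos.2 ha).le.trans hy
    have hay : 1 ≤ a * y := by rwa [← inv_le_iff_one_le_mul₀' ha]
    calc upperGammaNat n₁ (b * y) / upperGammaNat n₂ (a * y)
        ≤ C * exp (-(c * (b * y))) / exp (-(a * y)) :=
          div_le_div₀ (by positivity) (upperGammaNat_le n₁ hc₀ hc₁ (by positivity))
            (exp_pos _) (exp_neg_le_upperGammaNat n₂ hay)
      _ = C * exp ((a - c * b) * y) := by
          rw [mul_div_assoc, ← exp_sub]; ring_nf

theorem stmt4_general (L m k : ℕ) (hm : 1 ≤ m) (hmk : m < k)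
    (θ : ℝ) (hθ : 0 < θ) :
    Tendsto (fun P : ℝ =>
        (∫ t in Set.Ioi ((k : ℝ) * θ / P), t ^ (L - k) * Real.exp (-t)) /
        (∫ t in Set.Ioi ((m : ℝ) * θ / P), t ^ (L - m) * Real.exp (-t)))
      (nhdsWithin 0 (Set.Ioi 0)) (nhds 0) := by
  have hmθ : 0 < (m : ℝ) * θ := by positivity
  have hmkθ : (m : ℝ) * θ < k * θ := by gcongr
  exact (tendsto_upperGammaNat_div_atTop (L - k) (L - m) hmθ hmkθ).comp tendsto_inv_nhdsGT_zero

/-- As `P → 0⁺`, the ratio of upper incomplete gamma functions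
`Γ(L−k+1, kθ/P) / Γ(L−m+1, mθ/P)` tends to `0`, for integers `1 ≤ m < k ≤ L` and `θ > 0`. -/
theorem stmt4 (L m k : ℕ) (hm : 1 ≤ m) (hmk : m < k) (hkL : k ≤ L)
    (θ : ℝ) (hθ : 0 < θ) :
    Tendsto (fun P : ℝ =>
        (∫ t in Set.Ioi ((k : ℝ) * θ / P), t ^ (L - k) * Real.exp (-t)) /
        (∫ t in Set.Ioi ((m : ℝ) * θ / P), t ^ (L - m) * Real.exp (-t)))
      (nhdsWithin 0 (Set.Ioi 0)) (nhds 0) :=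
  stmt4_general L m k hm hmk θ hθ
end

section
/- For B ≥ 0, L ≥ 2, θ > 0, P > 0, K with 1 ≤ K ≤ L, define f(B) = 2^{−B/(L−1)}(1 − 1/L)(1+θ)(K−1+θK/P) / (1 − 2^{−B/(L−1)}(1 + (K−1)θ)), assuming the denominator is positive. Then for any δ ∈ (0,1), the condition 2^{−B/(L−1)} ≤ δ / ((L−1)(1+θ)(1 − 1/L + θ/P) + δ(1 + (L−1)θ)) with K = L implies f(B) ≤ δ. In particular B = (L−1)log₂(1/δ) + (L−1)log₂(L(1+Lθ)(1+θ/P)) suffices. -/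
/-!
Write `q = 2^{-B/(L-1)}`. For `K = L` the numerator of `f(B)` is `q N` with
`N = (L-1)(1+θ)(1-1/L+θ/P)`, and its denominator is `1 - q M` with `M = 1 + (L-1)θ`, so
`f(B) ≤ δ` is equivalent to the linear condition `q (N + δ M) ≤ δ`. The explicit choice of `B`
gives `q = δ / C` with `C = L(1+Lθ)(1+θ/P)`, and a polynomial inequality shows
`N + δ M ≤ N + M ≤ C`.
-/

open Real

lemma mul_div_one_sub_mul_le {q N M δ : ℝ} (hden : 0 < 1 - q * M) (hD : 0 < N + δ * M)
    (hq : q ≤ δ / (N + δ * M)) : q * N / (1 - q * M) ≤ δ := by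
  rw [le_div_iff₀ hD] at hq
  rw [div_le_iff₀ hden]
  linear_combination hq

lemma rpow_neg_div_eq_inv_of_eq_mul_logb {b c x B : ℝ} (hb : 0 < b) (hb1 : b ≠ 1) (hc : c ≠ 0)
    (hx : 0 < x) (hB : B = c * logb b x) : b ^ (-(B / c)) = x⁻¹ := by
  rw [hB, mul_div_cancel_left₀ _ hc, ← logb_inv, rpow_logb hb hb1 (inv_pos.2 hx)]

lemma sub_one_mul_one_add_mul_add_le {l θ t : ℝ} (hl : 1 ≤ l) (hθ : 0 ≤ θ) (ht : 0 ≤ t) :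
    (l - 1) * (1 + θ) * (1 - 1 / l + t) + (1 + (l - 1) * θ) ≤ l * (1 + l * θ) * (1 + t) := by
  have hl0 : 0 < l := by linarith
  rw [← sub_nonneg]
  have key : l * (1 + l * θ) * (1 + t) - ((l - 1) * (1 + θ) * (1 - 1 / l + t) + (1 + (l - 1) * θ))
      = ((l - 1) + θ * ((l - 1) ^ 3 + l ^ 2) + θ * t * l * ((l - 1) ^ 2 + l) + t * l) / l := by
    field_simp
    ring
  rw [key]
  have hl1 : 0 ≤ l - 1 := by linarith
  positivity

theorem stmt19_general (L K : ℕ) (hL : 2 ≤ L) (hKeqL : K = L)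
    (B θ P δ : ℝ) (hθ : 0 < θ) (hP : 0 < P) (hδ : δ ∈ Set.Ioo (0 : ℝ) 1)
    (hden : 0 < 1 - (2 : ℝ) ^ (-(B / ((L : ℝ) - 1))) * (1 + ((K : ℝ) - 1) * θ)) :
    ((2 : ℝ) ^ (-(B / ((L : ℝ) - 1))) ≤
        δ / (((L : ℝ) - 1) * (1 + θ) * (1 - 1 / (L : ℝ) + θ / P) + δ * (1 + ((L : ℝ) - 1) * θ)) →
      (2 : ℝ) ^ (-(B / ((L : ℝ) - 1))) * (1 - 1 / (L : ℝ)) * (1 + θ) *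
          ((K : ℝ) - 1 + θ * (K : ℝ) / P) /
          (1 - (2 : ℝ) ^ (-(B / ((L : ℝ) - 1))) * (1 + ((K : ℝ) - 1) * θ)) ≤ δ)
    ∧ (B = ((L : ℝ) - 1) * Real.logb 2 (1 / δ)
          + ((L : ℝ) - 1) * Real.logb 2 ((L : ℝ) * (1 + (L : ℝ) * θ) * (1 + θ / P)) →
      (2 : ℝ) ^ (-(B / ((L : ℝ) - 1))) * (1 - 1 / (L : ℝ)) * (1 + θ) *
          ((K : ℝ) - 1 + θ * (K : ℝ) / P) /
          (1 - (2 : ℝ) ^ (-(B / ((L : ℝ) - 1))) * (1 + ((K : ℝ) - 1) * θ)) ≤ δ) := by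
  subst hKeqL
  obtain ⟨hδ0, hδ1⟩ := hδ
  have hK : (2 : ℝ) ≤ K := by exact_mod_cast hL
  set q := (2 : ℝ) ^ (-(B / ((K : ℝ) - 1))) with hq_def
  set N := ((K : ℝ) - 1) * (1 + θ) * (1 - 1 / (K : ℝ) + θ / P)
  set M := 1 + ((K : ℝ) - 1) * θ
  set C := (K : ℝ) * (1 + (K : ℝ) * θ) * (1 + θ / P)
  have hnum : q * (1 - 1 / (K : ℝ)) * (1 + θ) * ((K : ℝ) - 1 + θ * K / P) = q * N := by
    simp only [N]
    field_simp
  have hM : 0 < M := by nlinarith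
  have hD : 0 < N + δ * M := by
    have : 0 < 1 - 1 / (K : ℝ) := by rw [sub_pos, div_lt_one] <;> linarith
    have : 0 < N := mul_pos (mul_pos (by linarith) (by linarith)) (by positivity)
    positivity
  have hlinear := mul_div_one_sub_mul_le hden hD
  rw [hnum]
  refine ⟨hlinear, fun hB => hlinear ?_⟩
  have hC : 0 < C := by positivity
  have hq : q = δ / C := by
    rw [← mul_add, ← logb_mul (by positivity) hC.ne'] at hB
    rw [hq_def, rpow_neg_div_eq_inv_of_eq_mul_logb two_pos (by norm_num) (by linarith) (by positivity) hB,
      one_div_mul_eq_div, inv_div]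
  rw [hq]
  gcongr
  calc N + δ * M ≤ N + M := by nlinarith
    _ ≤ C := sub_one_mul_one_add_mul_add_le (by linarith) hθ.le (by positivity)

/-- Feedback requirement (proof of Lemma 5): with `q = 2^{−B/(L−1)}` and `K = L`,
if `q ≤ δ/((L−1)(1+θ)(1−1/L+θ/P) + δ(1+(L−1)θ))` then the loss factor
`f(B) = q(1−1/L)(1+θ)(K−1+θK/P)/(1 − q(1+(K−1)θ))` is at most `δ`; in particular
`B = (L−1)log₂(1/δ) + (L−1)log₂(L(1+Lθ)(1+θ/P))` suffices. -/
theorem stmt19 (L K : ℕ) (hL : 2 ≤ L) (hK1 : 1 ≤ K) (hKL : K ≤ L) (hKeqL : K = L)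
    (B θ P δ : ℝ) (hB : 0 ≤ B) (hθ : 0 < θ) (hP : 0 < P) (hδ : δ ∈ Set.Ioo (0 : ℝ) 1)
    (hden : 0 < 1 - (2 : ℝ) ^ (-(B / ((L : ℝ) - 1))) * (1 + ((K : ℝ) - 1) * θ)) :
    ((2 : ℝ) ^ (-(B / ((L : ℝ) - 1))) ≤
        δ / (((L : ℝ) - 1) * (1 + θ) * (1 - 1 / (L : ℝ) + θ / P) + δ * (1 + ((L : ℝ) - 1) * θ)) →
      (2 : ℝ) ^ (-(B / ((L : ℝ) - 1))) * (1 - 1 / (L : ℝ)) * (1 + θ) *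
          ((K : ℝ) - 1 + θ * (K : ℝ) / P) /
          (1 - (2 : ℝ) ^ (-(B / ((L : ℝ) - 1))) * (1 + ((K : ℝ) - 1) * θ)) ≤ δ)
    ∧ (B = ((L : ℝ) - 1) * Real.logb 2 (1 / δ)
          + ((L : ℝ) - 1) * Real.logb 2 ((L : ℝ) * (1 + (L : ℝ) * θ) * (1 + θ / P)) →
      (2 : ℝ) ^ (-(B / ((L : ℝ) - 1))) * (1 - 1 / (L : ℝ)) * (1 + θ) *
          ((K : ℝ) - 1 + θ * (K : ℝ) / P) /
          (1 - (2 : ℝ) ^ (-(B / ((L : ℝ) - 1))) * (1 + ((K : ℝ) - 1) * θ)) ≤ δ) :=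
  stmt19_general L K hL hKeqL B θ P δ hθ hP hδ hden
end
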